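/- Let ℳ be a right rigid monoidal category and t : Id ⇒ (·)^∨∨ a natural isomorphism, with induced left duality data ẽv, c̃oev. Then t is monoidal with respect to the canonical monoidal structure (ω², ω⁰) on the double-dual functor (i.e. t is a pivotal structure) if and only if for all X, Y ∈ ℳ the morphism Y^∨ ⊗ X^∨ → (X ⊗ Y)^∨ obtained by pairing with coev_{X⊗Y} and contracting via the nested evaluations ev_X and ev_Y (right-duality bending) coincides with the morphism Y^∨ ⊗ X^∨ → (X ⊗ Y)^∨ obtained by pairing with c̃oev_{X⊗Y} and contracting via the nested evaluations ẽv_Y and ẽv_X (left-duality bending). -/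

import Mathlib

open CategoryTheory MonoidalCategory

universe v u

/-- A right duality structure on a monoidal category: every object `A` is assigned a dual
`A^∨` together with evaluation `ev_A : A^∨ ⊗ A → I` and coevaluation `coev_A : I → A ⊗ A^∨`
subject to the two Zorro moves. -/
structure RightRigidData (C : Type u) [Category.{v} C] [MonoidalCategory C] where
  dual : C → C
  ev : ∀ X : C, dual X ⊗ X ⟶ 𝟙_ C
  coev : ∀ X : C, 𝟙_ C ⟶ X ⊗ dual X
  zorro₁ : ∀ X : C,
    (λ_ X).inv ≫ (coev X ▷ X) ≫ (α_ X (dual X) X).hom ≫ (X ◁ ev X) ≫ (ρ_ X).hom = 𝟙 X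
  zorro₂ : ∀ X : C,
    (ρ_ (dual X)).inv ≫ (dual X ◁ coev X) ≫ (α_ (dual X) X (dual X)).inv ≫
      (ev X ▷ dual X) ≫ (λ_ (dual X)).hom = 𝟙 (dual X)

variable {C : Type u} [Category.{v} C] [MonoidalCategory C]

namespace RightRigidData

variable (D : RightRigidData C)

/-- The dual (right transpose) of a morphism,
`φ^∨ = λ ∘ (ev_Y ⊗ id) ∘ α⁻¹ ∘ (id ⊗ (φ ⊗ id)) ∘ (id ⊗ coev_X) ∘ ρ⁻¹`. -/
noncomputable def dualHom {X Y : C} (f : X ⟶ Y) : D.dual Y ⟶ D.dual X :=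
  (ρ_ (D.dual Y)).inv ≫ (D.dual Y ◁ D.coev X) ≫ (D.dual Y ◁ (f ▷ D.dual X)) ≫
    (α_ (D.dual Y) Y (D.dual X)).inv ≫ (D.ev Y ▷ D.dual X) ≫ (λ_ (D.dual X)).hom

/-- `ν⁰ = λ_{I^∨} ∘ coev_I : I → I^∨`. -/
noncomputable def nu0 : 𝟙_ C ⟶ D.dual (𝟙_ C) :=
  D.coev (𝟙_ C) ≫ (λ_ (D.dual (𝟙_ C))).hom

/-- The canonical morphism `ν²_{X,Y} : X^∨ ⊗ Y^∨ → (Y ⊗ X)^∨` built from the right duality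
data `ev_X`, `ev_Y` and `coev_{Y⊗X}`. -/
noncomputable def nu2 (X Y : C) : D.dual X ⊗ D.dual Y ⟶ D.dual (Y ⊗ X) :=
  (D.dual X ◁ (ρ_ (D.dual Y)).inv) ≫
  (D.dual X ◁ (D.dual Y ◁ D.coev (Y ⊗ X))) ≫
  (D.dual X ◁ (α_ (D.dual Y) (Y ⊗ X) (D.dual (Y ⊗ X))).inv) ≫
  (D.dual X ◁ ((α_ (D.dual Y) Y X).inv ▷ D.dual (Y ⊗ X))) ≫
  (D.dual X ◁ ((D.ev Y ▷ X) ▷ D.dual (Y ⊗ X))) ≫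
  (D.dual X ◁ ((λ_ X).hom ▷ D.dual (Y ⊗ X))) ≫
  (α_ (D.dual X) X (D.dual (Y ⊗ X))).inv ≫
  (D.ev X ▷ D.dual (Y ⊗ X)) ≫ (λ_ (D.dual (Y ⊗ X))).hom

/-- Left (tilded) evaluation `ẽv_X = ev_{X^∨} ∘ (t_X ⊗ id_{X^∨})` induced by a family of
isomorphisms `t_X : X ≅ X^∨∨`. -/
noncomputable def tev (t : ∀ X : C, X ≅ D.dual (D.dual X)) (X : C) : X ⊗ D.dual X ⟶ 𝟙_ C :=
  ((t X).hom ▷ D.dual X) ≫ D.ev (D.dual X)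

/-- Left (tilded) coevaluation `c̃oev_X = (id_{X^∨} ⊗ t_X⁻¹) ∘ coev_{X^∨}`. -/
noncomputable def tcoev (t : ∀ X : C, X ≅ D.dual (D.dual X)) (X : C) : 𝟙_ C ⟶ D.dual X ⊗ X :=
  D.coev (D.dual X) ≫ (D.dual X ◁ (t X).inv)

/-- A pivotal structure: a monoidal natural isomorphism `t : Id ⇒ (·)^∨∨`, where the
double-dual functor carries the canonical monoidal structure
`ω⁰ = ((ν⁰)⁻¹)^∨ ∘ ν⁰` and `ω²_{X,Y} = ((ν²_{Y,X})⁻¹)^∨ ∘ ν²_{X^∨,Y^∨}`.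
(The inverses of `ν⁰` and `ν²` are carried along as data with their defining equations.) -/
structure Pivotal (D : RightRigidData C) where
  t : ∀ X : C, X ≅ D.dual (D.dual X)
  naturality : ∀ {X Y : C} (f : X ⟶ Y),
    f ≫ (t Y).hom = (t X).hom ≫ D.dualHom (D.dualHom f)
  nu0Inv : D.dual (𝟙_ C) ⟶ 𝟙_ C
  nu0_comp : D.nu0 ≫ nu0Inv = 𝟙 _
  comp_nu0 : nu0Inv ≫ D.nu0 = 𝟙 _
  nu2Inv : ∀ X Y : C, D.dual (Y ⊗ X) ⟶ D.dual X ⊗ D.dual Y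
  nu2_comp : ∀ X Y : C, D.nu2 X Y ≫ nu2Inv X Y = 𝟙 _
  comp_nu2 : ∀ X Y : C, nu2Inv X Y ≫ D.nu2 X Y = 𝟙 _
  monoidal_unit : (t (𝟙_ C)).hom = D.nu0 ≫ D.dualHom nu0Inv
  monoidal_tensor : ∀ X Y : C,
    ((t X).hom ⊗ₘ (t Y).hom) ≫ D.nu2 (D.dual X) (D.dual Y) ≫ D.dualHom (nu2Inv Y X)
      = (t (X ⊗ Y)).hom

/-- Action of the defect `X` on bulk fields, the defect wrapped counterclockwise:
`𝒟_l(X)(φ) = ev_X ∘ (id_{X^∨} ⊗ (λ_X ∘ (φ ⊗ id_X) ∘ λ_X⁻¹)) ∘ c̃oev_X`. -/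
noncomputable def Dl (t : ∀ X : C, X ≅ D.dual (D.dual X)) (X : C) (φ : 𝟙_ C ⟶ 𝟙_ C) :
    𝟙_ C ⟶ 𝟙_ C :=
  D.tcoev t X ≫ (D.dual X ◁ ((λ_ X).inv ≫ (φ ▷ X) ≫ (λ_ X).hom)) ≫ D.ev X

/-- `𝒟_r(X)(φ) = ẽv_X ∘ ((ρ_X ∘ (id_X ⊗ φ) ∘ ρ_X⁻¹) ⊗ id_{X^∨}) ∘ coev_X`. -/
noncomputable def Dr (t : ∀ X : C, X ≅ D.dual (D.dual X)) (X : C) (φ : 𝟙_ C ⟶ 𝟙_ C) :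
    𝟙_ C ⟶ 𝟙_ C :=
  D.coev X ≫ (((ρ_ X).inv ≫ (X ◁ φ) ≫ (ρ_ X).hom) ▷ D.dual X) ≫ D.tev t X

end RightRigidData

open RightRigidData

/-- The left-duality bending morphism `Y^∨ ⊗ X^∨ → (X ⊗ Y)^∨`: pair with `c̃oev_{X⊗Y}` and
contract via the nested evaluations `ẽv_Y` (inner) and `ẽv_X` (outer). -/
noncomputable def leftBend {C : Type u} [Category.{v} C] [MonoidalCategory C]
    (D : RightRigidData C) (t : ∀ X : C, X ≅ D.dual (D.dual X)) (X Y : C) :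
    D.dual Y ⊗ D.dual X ⟶ D.dual (X ⊗ Y) :=
  (λ_ (D.dual Y ⊗ D.dual X)).inv ≫
  (D.tcoev t (X ⊗ Y) ▷ (D.dual Y ⊗ D.dual X)) ≫
  (α_ (D.dual (X ⊗ Y)) (X ⊗ Y) (D.dual Y ⊗ D.dual X)).hom ≫
  (D.dual (X ⊗ Y) ◁
    ((α_ X Y (D.dual Y ⊗ D.dual X)).hom ≫
     (X ◁ (α_ Y (D.dual Y) (D.dual X)).inv) ≫
     (X ◁ (D.tev t Y ▷ D.dual X)) ≫
     (X ◁ (λ_ (D.dual X)).hom) ≫ D.tev t X)) ≫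
  (ρ_ (D.dual (X ⊗ Y))).hom

/-!
Both sides of the tensor condition `ω²_{X,Y} ∘ (t_X ⊗ t_Y) = t_{X⊗Y}` are morphisms into
`(X ⊗ Y)^∨∨`, hence are determined by their pairing with `(X ⊗ Y)^∨` through `ev`. The pairing
of `t_{X⊗Y}` is `ẽv_{X⊗Y}` itself. In the pairing of the left-hand side, `t_X ⊗ t_Y` turns the
nested evaluation by `ev_{X^∨}`, `ev_{Y^∨}` into the nested evaluation by `ẽv_X`, `ẽv_Y`, so that
this pairing is `ẽv_{X⊗Y}` precomposed with the left bending morphism after `(ν²_{Y,X})⁻¹`.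
Morphisms into a dual are equally determined by their pairing through `ẽv`, so the tensor
condition at `(X, Y)` says exactly that the left bending morphism is `ν²_{Y,X}`.

The unit condition comes for free: naturality of `t` at `λ_I`, the tensor condition at `(I, I)`
and the left unitality of the double-dual functor give `λ_I ≫ t_I = (t_I ⊗ t_I) ≫ (ω⁰)⁻¹ ▷ _ ≫ λ`,
and cancelling the monomorphism `t_I` leaves `t_I ≫ (ω⁰)⁻¹ = 𝟙`.
-/

namespace CategoryTheory

theorem MonoidalCategory.comp_eq_id_of_leftUnitor_comp {A : C} (f : 𝟙_ C ⟶ A) [Mono f]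
    (w : A ⟶ 𝟙_ C) (h : (λ_ (𝟙_ C)).hom ≫ f = (f ⊗ₘ f) ≫ w ▷ A ≫ (λ_ A).hom) :
    f ≫ w = 𝟙 _ := by
  have h' : (f ≫ w) ▷ 𝟙_ C ≫ (λ_ (𝟙_ C)).hom = (λ_ (𝟙_ C)).hom := by
    rw [← cancel_mono f, Category.assoc]
    conv_rhs => rw [h, tensorHom_def, Category.assoc, whisker_exchange_assoc,
      leftUnitor_naturality]
    rw [comp_whiskerRight, Category.assoc]
  rw [whiskerRight_id, unitors_equal] at h'
  exact (cancel_epi (ρ_ (𝟙_ C)).hom).mp (by simpa using h')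

namespace ExactPairing

variable (X Y : C) [ExactPairing X Y]

def homRightDualEquiv (W : C) : (W ⟶ Y) ≃ (W ⊗ X ⟶ 𝟙_ C) :=
  ((Iso.refl W).homCongr (λ_ Y).symm).trans (tensorRightHomEquiv W X Y (𝟙_ C)).symm

theorem homRightDualEquiv_apply {W : C} (f : W ⟶ Y) :
    homRightDualEquiv X Y W f = f ▷ X ≫ ε_ X Y := by
  simp [homRightDualEquiv, tensorRightHomEquiv, unitors_inv_equal]

theorem homRightDualEquiv_symm_apply {W : C} (e : W ⊗ X ⟶ 𝟙_ C) :
    (homRightDualEquiv X Y W).symm e =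
      (ρ_ W).inv ≫ W ◁ η_ X Y ≫ (α_ W X Y).inv ≫ e ▷ Y ≫ (λ_ Y).hom := by
  simp [homRightDualEquiv, tensorRightHomEquiv]

def homLeftDualEquiv (W : C) : (W ⟶ X) ≃ (Y ⊗ W ⟶ 𝟙_ C) :=
  ((Iso.refl W).homCongr (ρ_ X).symm).trans (tensorLeftHomEquiv W X Y (𝟙_ C)).symm

theorem homLeftDualEquiv_apply {W : C} (f : W ⟶ X) :
    homLeftDualEquiv X Y W f = Y ◁ f ≫ ε_ X Y := by
  simp [homLeftDualEquiv, tensorLeftHomEquiv, unitors_equal]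

theorem homLeftDualEquiv_symm_apply {W : C} (e : Y ⊗ W ⟶ 𝟙_ C) :
    (homLeftDualEquiv X Y W).symm e =
      (λ_ W).inv ≫ η_ X Y ▷ W ≫ (α_ X Y W).hom ≫ X ◁ e ≫ (ρ_ X).hom := by
  simp [homLeftDualEquiv, tensorLeftHomEquiv]

end ExactPairing

end CategoryTheory

namespace RightRigidData

variable (D : RightRigidData C)

theorem coev_whiskerRight_comp_ev (X : C) :
    D.coev X ▷ X ≫ (α_ X (D.dual X) X).hom ≫ X ◁ D.ev X = (λ_ X).hom ≫ (ρ_ X).inv := by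
  rw [← Iso.inv_comp_eq, ← Iso.comp_hom_eq_id]
  simpa using D.zorro₁ X

theorem whiskerLeft_coev_comp_ev (X : C) :
    D.dual X ◁ D.coev X ≫ (α_ (D.dual X) X (D.dual X)).inv ≫ D.ev X ▷ D.dual X =
      (ρ_ (D.dual X)).hom ≫ (λ_ (D.dual X)).inv := by
  rw [← Iso.inv_comp_eq, ← Iso.comp_hom_eq_id]
  simpa using D.zorro₂ X

abbrev exactPairing (X : C) : ExactPairing X (D.dual X) where
  coevaluation' := D.coev X
  evaluation' := D.ev X
  coevaluation_evaluation' := D.whiskerLeft_coev_comp_ev X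
  evaluation_coevaluation' := D.coev_whiskerRight_comp_ev X

def evEquiv (R W : C) : (W ⟶ D.dual R) ≃ (W ⊗ R ⟶ 𝟙_ C) :=
  @ExactPairing.homRightDualEquiv _ _ _ R (D.dual R) (D.exactPairing R) W

theorem evEquiv_apply {R W : C} (f : W ⟶ D.dual R) : D.evEquiv R W f = f ▷ R ≫ D.ev R :=
  @ExactPairing.homRightDualEquiv_apply _ _ _ R (D.dual R) (D.exactPairing R) W f

theorem evEquiv_symm_apply {R W : C} (e : W ⊗ R ⟶ 𝟙_ C) :
    (D.evEquiv R W).symm e =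
      (ρ_ W).inv ≫ W ◁ D.coev R ≫ (α_ W R (D.dual R)).inv ≫ e ▷ D.dual R ≫ (λ_ _).hom :=
  @ExactPairing.homRightDualEquiv_symm_apply _ _ _ R (D.dual R) (D.exactPairing R) W e

theorem ev_ext {R W : C} {f g : W ⟶ D.dual R} (h : f ▷ R ≫ D.ev R = g ▷ R ≫ D.ev R) :
    f = g :=
  (D.evEquiv R W).injective (by simpa only [evEquiv_apply] using h)

theorem dualHom_whiskerRight_ev {X Y : C} (f : X ⟶ Y) :
    D.dualHom f ▷ X ≫ D.ev X = D.dual Y ◁ f ≫ D.ev Y := by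
  have h : D.dualHom f = (D.evEquiv X _).symm (D.dual Y ◁ f ≫ D.ev Y) := by
    rw [evEquiv_symm_apply, dualHom]
    monoidal
  rw [← evEquiv_apply, h, Equiv.apply_symm_apply]

@[simp]
theorem dualHom_id (X : C) : D.dualHom (𝟙 X) = 𝟙 (D.dual X) :=
  D.ev_ext (by simp [dualHom_whiskerRight_ev])

theorem dualHom_comp {X Y Z : C} (f : X ⟶ Y) (g : Y ⟶ Z) :
    D.dualHom (f ≫ g) = D.dualHom g ≫ D.dualHom f := by
  refine D.ev_ext ?_
  rw [dualHom_whiskerRight_ev, comp_whiskerRight, Category.assoc, dualHom_whiskerRight_ev,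
    ← whisker_exchange_assoc, dualHom_whiskerRight_ev, whiskerLeft_comp_assoc]

theorem nu0_whiskerRight_ev : D.nu0 ▷ 𝟙_ C ≫ D.ev (𝟙_ C) = (λ_ (𝟙_ C)).hom := by
  calc _ = 𝟙 _ ⊗≫ (D.coev (𝟙_ C) ▷ 𝟙_ C ≫ (α_ _ _ _).hom ≫ 𝟙_ C ◁ D.ev (𝟙_ C)) ⊗≫ 𝟙 _ := by
        rw [nu0]
        monoidal
    _ = _ := by
        rw [coev_whiskerRight_comp_ev]
        monoidal

noncomputable def tensorEv (X Y : C) : (D.dual X ⊗ D.dual Y) ⊗ (Y ⊗ X) ⟶ 𝟙_ C :=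
  (α_ _ _ _).hom ≫ D.dual X ◁ ((α_ _ _ _).inv ≫ D.ev Y ▷ X ≫ (λ_ X).hom) ≫ D.ev X

theorem nu2_whiskerRight_ev (X Y : C) :
    D.nu2 X Y ▷ (Y ⊗ X) ≫ D.ev (Y ⊗ X) = D.tensorEv X Y := by
  have h : D.nu2 X Y = (D.evEquiv (Y ⊗ X) _).symm (D.tensorEv X Y) := by
    rw [evEquiv_symm_apply, nu2, tensorEv]
    monoidal
  rw [← evEquiv_apply, h, Equiv.apply_symm_apply]

theorem dualHom_leftUnitor (A : C) :
    D.dualHom (λ_ A).hom = (ρ_ (D.dual A)).inv ≫ D.dual A ◁ D.nu0 ≫ D.nu2 A (𝟙_ C) := by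
  refine D.ev_ext ?_
  calc _ = 𝟙 _ ⊗≫ D.dual A ◁ ((D.nu0 ▷ 𝟙_ C ≫ D.ev (𝟙_ C)) ▷ A) ⊗≫ D.ev A := by
        rw [dualHom_whiskerRight_ev, nu0_whiskerRight_ev]
        monoidal
    _ = _ := by
        simp only [comp_whiskerRight, Category.assoc]
        rw [nu2_whiskerRight_ev, tensorEv]
        monoidal

theorem dualHom_rightUnitor (A : C) :
    D.dualHom (ρ_ A).hom = (λ_ (D.dual A)).inv ≫ D.nu0 ▷ D.dual A ≫ D.nu2 (𝟙_ C) A := by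
  refine D.ev_ext ?_
  calc _ = 𝟙 _ ⊗≫ ((α_ _ _ _).inv ≫ D.ev A ▷ 𝟙_ C ≫ (λ_ _).hom) ⊗≫
        (D.nu0 ▷ 𝟙_ C ≫ D.ev (𝟙_ C)) := by
        rw [dualHom_whiskerRight_ev, nu0_whiskerRight_ev]
        monoidal
    _ = 𝟙 _ ⊗≫ (D.nu0 ▷ (D.dual A ⊗ A ⊗ 𝟙_ C) ≫
        D.dual (𝟙_ C) ◁ ((α_ _ _ _).inv ≫ D.ev A ▷ 𝟙_ C ≫ (λ_ _).hom)) ⊗≫ D.ev (𝟙_ C) := by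
        rw [← whisker_exchange]
        monoidal
    _ = _ := by
        simp only [comp_whiskerRight, Category.assoc]
        rw [nu2_whiskerRight_ev, tensorEv]
        monoidal

theorem dualHom_whiskerRight_nu2 {X X' : C} (f : X ⟶ X') (Y : C) :
    D.dualHom f ▷ D.dual Y ≫ D.nu2 X Y = D.nu2 X' Y ≫ D.dualHom (Y ◁ f) := by
  refine D.ev_ext ?_
  rw [comp_whiskerRight, comp_whiskerRight, Category.assoc, Category.assoc, nu2_whiskerRight_ev,
    dualHom_whiskerRight_ev, ← whisker_exchange_assoc, nu2_whiskerRight_ev]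
  calc _ = 𝟙 _ ⊗≫ (D.dualHom f ▷ (D.dual Y ⊗ Y ⊗ X) ≫
        D.dual X ◁ ((α_ _ _ _).inv ≫ D.ev Y ▷ X ≫ (λ_ X).hom)) ⊗≫ D.ev X := by
        rw [tensorEv]
        monoidal
    _ = 𝟙 _ ⊗≫ D.dual X' ◁ ((α_ _ _ _).inv ≫ D.ev Y ▷ X ≫ (λ_ X).hom) ⊗≫
        (D.dualHom f ▷ X ≫ D.ev X) := by
        rw [← whisker_exchange]
        monoidal
    _ = 𝟙 _ ⊗≫ D.dual X' ◁ ((α_ _ _ _).inv ≫ (D.ev Y ▷ X ≫ 𝟙_ C ◁ f)) ⊗≫ D.ev X' := by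
        rw [dualHom_whiskerRight_ev]
        monoidal
    _ = _ := by
        rw [← whisker_exchange, tensorEv]
        monoidal

-- `(ν⁰)^∨ ≫ ν0Inv` is `(ω⁰)⁻¹`: this is the left unitality of `(·)^∨∨` with `(ω², ω⁰)`.
theorem doubleDual_left_unitality (A : C) {ν0Inv : D.dual (𝟙_ C) ⟶ 𝟙_ C}
    (h0 : ν0Inv ≫ D.nu0 = 𝟙 _) {φ : D.dual (𝟙_ C ⊗ A) ⟶ D.dual A ⊗ D.dual (𝟙_ C)}
    (hφ : D.nu2 A (𝟙_ C) ≫ φ = 𝟙 _) :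
    D.nu2 (D.dual (𝟙_ C)) (D.dual A) ≫ D.dualHom φ ≫ D.dualHom (D.dualHom (λ_ A).hom) =
      (D.dualHom D.nu0 ≫ ν0Inv) ▷ D.dual (D.dual A) ≫ (λ_ _).hom := by
  have hnu2 : D.nu2 (𝟙_ C) (D.dual A) =
      ν0Inv ▷ _ ≫ (λ_ _).hom ≫ D.dualHom (ρ_ (D.dual A)).hom := by
    rw [dualHom_rightUnitor, Iso.hom_inv_id_assoc, ← comp_whiskerRight_assoc, h0,
      id_whiskerRight, Category.id_comp]
  rw [← dualHom_comp, dualHom_leftUnitor, Category.assoc, Category.assoc, hφ, Category.comp_id,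
    dualHom_comp, ← Category.assoc, ← dualHom_whiskerRight_nu2, hnu2]
  simp only [Category.assoc, ← dualHom_comp, Iso.inv_hom_id, dualHom_id, Category.comp_id,
    comp_whiskerRight]

section LeftDuality

variable (t : ∀ X : C, X ≅ D.dual (D.dual X))

/-- `(tcoev, tev)` is the right duality of `X^∨` transported along `t X`. -/
abbrev leftExactPairing (X : C) : ExactPairing (D.dual X) X :=
  @exactPairingCongrRight _ _ _ _ _ _ (D.exactPairing (D.dual X)) (t X)

def tevEquiv (R W : C) : (W ⟶ D.dual R) ≃ (R ⊗ W ⟶ 𝟙_ C) :=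
  @ExactPairing.homLeftDualEquiv _ _ _ (D.dual R) R (D.leftExactPairing t R) W

theorem tevEquiv_apply {R W : C} (f : W ⟶ D.dual R) :
    D.tevEquiv t R W f = R ◁ f ≫ D.tev t R :=
  @ExactPairing.homLeftDualEquiv_apply _ _ _ (D.dual R) R (D.leftExactPairing t R) W f

theorem tevEquiv_symm_apply {R W : C} (e : R ⊗ W ⟶ 𝟙_ C) :
    (D.tevEquiv t R W).symm e =
      (λ_ W).inv ≫ D.tcoev t R ▷ W ≫ (α_ (D.dual R) R W).hom ≫ D.dual R ◁ e ≫ (ρ_ _).hom :=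
  @ExactPairing.homLeftDualEquiv_symm_apply _ _ _ (D.dual R) R (D.leftExactPairing t R) W e

noncomputable def tensorTev (X Y : C) : (X ⊗ Y) ⊗ (D.dual Y ⊗ D.dual X) ⟶ 𝟙_ C :=
  (α_ _ _ _).hom ≫ X ◁ ((α_ _ _ _).inv ≫ D.tev t Y ▷ D.dual X ≫ (λ_ _).hom) ≫ D.tev t X

theorem whiskerLeft_leftBend_tev (X Y : C) :
    (X ⊗ Y) ◁ leftBend D t X Y ≫ D.tev t (X ⊗ Y) = D.tensorTev t X Y := by
  have h : leftBend D t X Y = (D.tevEquiv t (X ⊗ Y) _).symm (D.tensorTev t X Y) := by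
    rw [tevEquiv_symm_apply, leftBend, tensorTev]
    simp only [Category.assoc, whiskerLeft_comp]
  rw [← tevEquiv_apply, h, Equiv.apply_symm_apply]

theorem tensorHom_whiskerRight_tensorEv (X Y : C) :
    ((t X).hom ⊗ₘ (t Y).hom) ▷ (D.dual Y ⊗ D.dual X) ≫ D.tensorEv (D.dual X) (D.dual Y) =
      D.tensorTev t X Y := by
  calc _ = 𝟙 _ ⊗≫ ((t X).hom ▷ (Y ⊗ D.dual Y ⊗ D.dual X) ≫
        D.dual (D.dual X) ◁ ((α_ _ _ _).inv ≫ ((t Y).hom ▷ D.dual Y ≫ D.ev (D.dual Y)) ▷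
          D.dual X ≫ (λ_ _).hom)) ⊗≫ D.ev (D.dual X) := by
        rw [tensorEv, MonoidalCategory.tensorHom_def]
        monoidal
    _ = _ := by
        rw [← whisker_exchange, tensorTev, tev, tev]
        monoidal

theorem doubleDual_tensor_whiskerRight_ev {X Y : C}
    (φ : D.dual (X ⊗ Y) ⟶ D.dual Y ⊗ D.dual X) :
    (((t X).hom ⊗ₘ (t Y).hom) ≫ D.nu2 (D.dual X) (D.dual Y) ≫ D.dualHom φ) ▷ D.dual (X ⊗ Y) ≫
        D.ev (D.dual (X ⊗ Y)) =
      (X ⊗ Y) ◁ (φ ≫ leftBend D t X Y) ≫ D.tev t (X ⊗ Y) := by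
  rw [comp_whiskerRight, comp_whiskerRight, Category.assoc, Category.assoc,
    dualHom_whiskerRight_ev, ← whisker_exchange_assoc, ← whisker_exchange_assoc,
    nu2_whiskerRight_ev, tensorHom_whiskerRight_tensorEv, whiskerLeft_comp_assoc,
    whiskerLeft_leftBend_tev]

theorem doubleDual_tensor_iff {X Y : C} {φ : D.dual (X ⊗ Y) ⟶ D.dual Y ⊗ D.dual X}
    (hφ : D.nu2 Y X ≫ φ = 𝟙 _) (hφ' : φ ≫ D.nu2 Y X = 𝟙 _) :
    ((t X).hom ⊗ₘ (t Y).hom) ≫ D.nu2 (D.dual X) (D.dual Y) ≫ D.dualHom φ = (t (X ⊗ Y)).hom ↔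
      D.nu2 Y X = leftBend D t X Y := by
  let e : D.dual Y ⊗ D.dual X ≅ D.dual (X ⊗ Y) := ⟨D.nu2 Y X, φ, hφ, hφ'⟩
  calc _ ↔ (X ⊗ Y) ◁ (φ ≫ leftBend D t X Y) ≫ D.tev t (X ⊗ Y) =
        (X ⊗ Y) ◁ 𝟙 _ ≫ D.tev t (X ⊗ Y) := by
        rw [← (D.evEquiv _ _).injective.eq_iff, evEquiv_apply, evEquiv_apply,
          doubleDual_tensor_whiskerRight_ev, whiskerLeft_id, Category.id_comp, tev]
    _ ↔ e.inv ≫ leftBend D t X Y = 𝟙 _ := by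
        rw [← tevEquiv_apply, ← tevEquiv_apply, (D.tevEquiv t _ _).injective.eq_iff]
    _ ↔ _ := by rw [e.inv_comp_eq_id, eq_comm]

theorem doubleDual_unit_of_tensor {ν0Inv : D.dual (𝟙_ C) ⟶ 𝟙_ C}
    (h0 : D.nu0 ≫ ν0Inv = 𝟙 _) (h0' : ν0Inv ≫ D.nu0 = 𝟙 _)
    {φ : D.dual (𝟙_ C ⊗ 𝟙_ C) ⟶ D.dual (𝟙_ C) ⊗ D.dual (𝟙_ C)}
    (hφ : D.nu2 (𝟙_ C) (𝟙_ C) ≫ φ = 𝟙 _)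
    (hnat : (λ_ (𝟙_ C)).hom ≫ (t (𝟙_ C)).hom =
      (t (𝟙_ C ⊗ 𝟙_ C)).hom ≫ D.dualHom (D.dualHom (λ_ (𝟙_ C)).hom))
    (htensor : ((t (𝟙_ C)).hom ⊗ₘ (t (𝟙_ C)).hom) ≫ D.nu2 (D.dual (𝟙_ C)) (D.dual (𝟙_ C)) ≫
      D.dualHom φ = (t (𝟙_ C ⊗ 𝟙_ C)).hom) :
    (t (𝟙_ C)).hom = D.nu0 ≫ D.dualHom ν0Inv := by
  have ht : (t (𝟙_ C)).hom ≫ D.dualHom D.nu0 ≫ ν0Inv = 𝟙 _ :=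
    comp_eq_id_of_leftUnitor_comp _ _ (by
      rw [hnat, ← htensor, Category.assoc, Category.assoc, D.doubleDual_left_unitality _ h0' hφ])
  have hω : (D.nu0 ≫ D.dualHom ν0Inv) ≫ D.dualHom D.nu0 ≫ ν0Inv = 𝟙 _ := by
    rw [Category.assoc, ← Category.assoc (D.dualHom ν0Inv), ← dualHom_comp, h0, dualHom_id,
      Category.id_comp, h0]
  rw [Iso.hom_comp_eq_id] at ht
  rw [ht, Iso.comp_inv_eq_id] at hω
  exact hω.symm

end LeftDuality

end RightRigidData

/-- **Statement 9.** Let `t : Id ⇒ (·)^∨∨` be a natural isomorphism on a right rigid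
monoidal category.  Then `t` is monoidal with respect to the canonical monoidal structure
`(ω², ω⁰)` on the double-dual functor (i.e. `t` is a pivotal structure) if and only if for
all `X, Y` the right-duality bending morphism `ν²_{Y,X} : Y^∨ ⊗ X^∨ → (X ⊗ Y)^∨` coincides
with the left-duality bending morphism built from `ẽv`, `c̃oev`. -/
theorem statement9 {C : Type u} [Category.{v} C] [MonoidalCategory C]
    (D : RightRigidData C) (t : ∀ X : C, X ≅ D.dual (D.dual X))
    (hnat : ∀ {X Y : C} (f : X ⟶ Y), f ≫ (t Y).hom = (t X).hom ≫ D.dualHom (D.dualHom f))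
    -- the (unique) inverses of `ν⁰` and `ν²`, entering the coherence data `ω⁰`, `ω²`:
    (nu0Inv : D.dual (𝟙_ C) ⟶ 𝟙_ C)
    (h0a : D.nu0 ≫ nu0Inv = 𝟙 _) (h0b : nu0Inv ≫ D.nu0 = 𝟙 _)
    (nu2Inv : ∀ X Y : C, D.dual (Y ⊗ X) ⟶ D.dual X ⊗ D.dual Y)
    (h2a : ∀ X Y : C, D.nu2 X Y ≫ nu2Inv X Y = 𝟙 _)
    (h2b : ∀ X Y : C, nu2Inv X Y ≫ D.nu2 X Y = 𝟙 _) :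
    ((t (𝟙_ C)).hom = D.nu0 ≫ D.dualHom nu0Inv ∧
     (∀ X Y : C,
        ((t X).hom ⊗ₘ (t Y).hom) ≫ D.nu2 (D.dual X) (D.dual Y) ≫ D.dualHom (nu2Inv Y X)
          = (t (X ⊗ Y)).hom)) ↔
    (∀ X Y : C, D.nu2 Y X = leftBend D t X Y) := by
  have tensor_iff X Y := D.doubleDual_tensor_iff t (h2a Y X) (h2b Y X)
  refine ⟨fun ⟨_, htensor⟩ X Y => (tensor_iff X Y).mp (htensor X Y), fun hbend => ?_⟩
  have htensor X Y := (tensor_iff X Y).mpr (hbend X Y)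
  exact ⟨D.doubleDual_unit_of_tensor t h0a h0b (h2a _ _) (hnat _) (htensor _ _), htensor⟩
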